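/- arXiv:2002.10303 — 2 statements merged into one kernel-verified Lean document; each statement's English description precedes it below -/
import Mathlib

section
/- Let A be a Wheeler NFA, u, v states, and α, β ∈ Pref(L(A)) with α ∈ I_u, β ∈ I_v, and not both α, β belonging to I_u ∩ I_v. Then α ≺ β if and only if u < v. -/
/-- The co-lexicographic (strict) order on strings. -/
def StrColex {α : Type*} [LinearOrder α] (x y : List α) : Prop :=
  List.Lex (· < ·) x.reverse y.reverse

/-- A Wheeler NFA: an NFA with a linear order on states whose minimum is the initial
state `s`, `s` has no incoming edges, and the two Wheeler properties hold. -/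
structure WNFA (α Q : Type*) [LinearOrder α] [LinearOrder Q] where
  δ : Q → α → Set Q
  s : Q
  F : Set Q
  s_min : ∀ q : Q, s ≤ q
  s_no_incoming : ∀ (u : Q) (a : α), s ∉ δ u a
  wheeler_i : ∀ ⦃u₁ u₂ : Q⦄ ⦃a₁ a₂ : α⦄ ⦃v₁ v₂ : Q⦄,
    v₁ ∈ δ u₁ a₁ → v₂ ∈ δ u₂ a₂ → a₁ < a₂ → v₁ < v₂
  wheeler_ii : ∀ ⦃u₁ u₂ : Q⦄ ⦃a : α⦄ ⦃v₁ v₂ : Q⦄,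
    v₁ ∈ δ u₁ a → v₂ ∈ δ u₂ a → u₁ < u₂ → v₁ ≤ v₂

namespace WNFA

variable {α Q : Type*} [LinearOrder α] [LinearOrder Q]

/-- The transition function extended to strings. -/
def δStar (A : WNFA α Q) : Q → List α → Set Q
  | q, [] => {q}
  | q, a :: w => {p | ∃ v ∈ A.δ q a, p ∈ A.δStar v w}

/-- The language accepted by the automaton. -/
def lang (A : WNFA α Q) : Set (List α) := {w | ∃ q ∈ A.F, q ∈ A.δStar A.s w}

/-- The set of prefixes of accepted words: the strings the automaton can read. -/
def Pref (A : WNFA α Q) : Set (List α) := {x | ∃ y, x ++ y ∈ A.lang}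

/-- `I_u`: the set of readable strings reaching state `u` from the initial state. -/
def Iu (A : WNFA α Q) (u : Q) : Set (List α) := {x | x ∈ A.Pref ∧ u ∈ A.δStar A.s x}

end WNFA

/-!
Run two strings `x ≺ y` backwards from states `u ∈ δ*(s, x)`, `v ∈ δ*(s, y)` with `v < u`.
Along their common suffix, Wheeler property (ii) keeps the state of the `x`-run no smaller
than that of the `y`-run. The runs can neither reach the first letter
where `x` and `y` differ (property (i) would reverse the order) nor exhaust `x` first (the
`x`-run would then sit at the minimum `s`), so they must meet in a common state. Exchanging the
tails after that state shows `x ∈ I_v` and `y ∈ I_u`, so both strings lie in `I_u ∩ I_v`.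
-/

namespace WNFA

variable {α Q : Type*} [LinearOrder α] [LinearOrder Q]

lemma mem_δStar_append_singleton (A : WNFA α Q) (q p : Q) (l : List α) (a : α) :
    p ∈ A.δStar q (l ++ [a]) ↔ ∃ w ∈ A.δStar q l, p ∈ A.δ w a := by
  induction l generalizing q with
  | nil => simp [δStar]
  | cons b l ih =>
    simp only [List.cons_append, δStar, Set.mem_ofPred_eq, ih]
    exact ⟨fun ⟨w, hw, w', hw', hp⟩ => ⟨w', ⟨w, hw, hw'⟩, hp⟩,
      fun ⟨w', ⟨w, hw, hw'⟩, hp⟩ => ⟨w, hw, w', hw', hp⟩⟩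

lemma mem_δStar_swap_of_lex_reverse (A : WNFA α Q) {xr yr : List α}
    (hlex : List.Lex (· < ·) xr yr) {u v : Q} (hu : u ∈ A.δStar A.s xr.reverse)
    (hv : v ∈ A.δStar A.s yr.reverse) (hvu : v < u) :
    v ∈ A.δStar A.s xr.reverse ∧ u ∈ A.δStar A.s yr.reverse := by
  induction hlex generalizing u v with
  | nil =>
    rw [List.reverse_nil, δStar, Set.mem_singleton_iff] at hu
    exact absurd (hu ▸ A.s_min v) hvu.not_ge
  | rel hab =>
    simp only [List.reverse_cons, mem_δStar_append_singleton] at hu hv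
    obtain ⟨_, _, hu⟩ := hu
    obtain ⟨_, _, hv⟩ := hv
    exact absurd (A.wheeler_i hu hv hab) hvu.not_gt
  | cons _ ih =>
    simp only [List.reverse_cons, mem_δStar_append_singleton] at hu hv ⊢
    obtain ⟨w, hw, hu⟩ := hu
    obtain ⟨w', hw', hv⟩ := hv
    rcases lt_trichotomy w w' with hlt | rfl | hgt
    · exact absurd (A.wheeler_ii hu hv hlt) hvu.not_ge
    · exact ⟨⟨w, hw, hv⟩, ⟨w, hw', hu⟩⟩
    · obtain ⟨hw'x, hwy⟩ := ih hw hw' hgt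
      exact ⟨⟨w', hw'x, hv⟩, ⟨w, hwy, hu⟩⟩

lemma mem_Iu_swap_of_strColex (A : WNFA α Q) {x y : List α} {u v : Q}
    (hxy : StrColex x y) (hx : x ∈ A.Iu u) (hy : y ∈ A.Iu v) (hvu : v < u) :
    x ∈ A.Iu v ∧ y ∈ A.Iu u := by
  have hswap := A.mem_δStar_swap_of_lex_reverse hxy
    (by simpa using hx.2) (by simpa using hy.2) hvu
  rw [List.reverse_reverse, List.reverse_reverse] at hswap
  exact ⟨⟨hx.1, hswap.1⟩, ⟨hy.1, hswap.2⟩⟩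

end WNFA

lemma strColex_trichotomous {α : Type*} [LinearOrder α] (x y : List α) :
    StrColex x y ∨ x = y ∨ StrColex y x := by
  unfold StrColex
  simpa only [List.reverse_inj] using
    trichotomous_of (List.Lex (· < · : α → α → Prop)) x.reverse y.reverse

/-- In a Wheeler NFA, if `x ∈ I_u`, `y ∈ I_v` and not both `x, y` lie in `I_u ∩ I_v`,
then `x ≺ y` iff `u < v`. -/
theorem colex_iff_lt_of_Iu {α Q : Type*} [LinearOrder α] [LinearOrder Q]
    (A : WNFA α Q) (u v : Q) (x y : List α)
    (hx : x ∈ A.Iu u) (hy : y ∈ A.Iu v)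
    (hnb : ¬ (x ∈ A.Iu u ∩ A.Iu v ∧ y ∈ A.Iu u ∩ A.Iu v)) :
    StrColex x y ↔ u < v := by
  constructor
  · intro hxy
    rcases lt_trichotomy u v with hlt | rfl | hgt
    · exact hlt
    · exact absurd ⟨⟨hx, hx⟩, ⟨hy, hy⟩⟩ hnb
    · obtain ⟨hxv, hyu⟩ := A.mem_Iu_swap_of_strColex hxy hx hy hgt
      exact absurd ⟨⟨hx, hxv⟩, ⟨hyu, hy⟩⟩ hnb
  · intro huv
    rcases strColex_trichotomous x y with hxy | rfl | hyx
    · exact hxy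
    · exact absurd ⟨⟨hx, hy⟩, ⟨hx, hy⟩⟩ hnb
    · obtain ⟨hyu, hxv⟩ := A.mem_Iu_swap_of_strColex hyx hy hx huv
      exact absurd ⟨⟨hx, hxv⟩, ⟨hyu, hy⟩⟩ hnb
end

section
/- Let A be a Wheeler DFA. For all α, β ∈ Pref(L(A)): if α ≺ β then δ(s, α) ≤ δ(s, β), and if δ(s, α) < δ(s, β) then α ≺ β. Consequently, for any monotone (weakly increasing or weakly decreasing) sequence (αᵢ) in (Pref(L(A)), ≺), the sequence of states δ(s, αᵢ) is eventually constant. -/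
/-!
Reading a string backwards, the Wheeler axioms say that the state reached on `x ++ [a]` is
governed first by the last letter `a` and then, among equal last letters, by the state reached
on `x`; by induction on the co-lexicographic comparison, `x ≺ y` forces `δ(s, x) ≤ δ(s, y)`.
Since `≺` is total and `δ(s, ·)` is single-valued, a strict inequality between states must
come from `x ≺ y`. A monotone sequence of readable strings therefore yields a monotone
sequence of states in the finite order `Q`, which stabilizes.
-/

namespace WNFA

variable {α Q : Type*} [LinearOrder α] [LinearOrder Q] (A : WNFA α Q)

def IsDeterministic : Prop := ∀ (q : Q) (a : α), (A.δ q a).Subsingleton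

lemma mem_δStar_append {x y : List α} {q p : Q} :
    p ∈ A.δStar q (x ++ y) ↔ ∃ r ∈ A.δStar q x, p ∈ A.δStar r y := by
  induction x generalizing q with
  | nil => simp [δStar]
  | cons a w ih =>
    simp only [List.cons_append, δStar, Set.mem_ofPred_eq, ih]
    constructor
    · rintro ⟨v, hv, r, hr, hp⟩
      exact ⟨r, ⟨v, hv, hr⟩, hp⟩
    · rintro ⟨r, ⟨v, hv, hr⟩, hp⟩
      exact ⟨v, hv, r, hr, hp⟩

lemma mem_δStar_concat {x : List α} {a : α} {q p : Q} :
    p ∈ A.δStar q (x ++ [a]) ↔ ∃ r ∈ A.δStar q x, p ∈ A.δ r a := by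
  simp [mem_δStar_append, δStar]

lemma δStar_nonempty_of_mem_Pref {x : List α} (hx : x ∈ A.Pref) :
    (A.δStar A.s x).Nonempty := by
  obtain ⟨y, q, -, hq⟩ := hx
  obtain ⟨r, hr, -⟩ := A.mem_δStar_append.mp hq
  exact ⟨r, hr⟩

variable {A}

lemma IsDeterministic.δStar_subsingleton (hA : A.IsDeterministic) (q : Q) (x : List α) :
    (A.δStar q x).Subsingleton := by
  induction x generalizing q with
  | nil => exact Set.subsingleton_singleton
  | cons a w ih =>
    rintro p ⟨v, hv, hp⟩ r ⟨v', hv', hr⟩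
    cases hA q a hv hv'
    exact ih v hp hr

lemma IsDeterministic.le_of_lex_reverse (hA : A.IsDeterministic) {x y : List α}
    (h : List.Lex (· < ·) x y) {u v : Q} (hu : u ∈ A.δStar A.s x.reverse)
    (hv : v ∈ A.δStar A.s y.reverse) : u ≤ v := by
  induction h generalizing u v with
  | nil =>
    rw [List.reverse_nil, δStar, Set.mem_singleton_iff] at hu
    exact hu ▸ A.s_min v
  | @cons a x y _ ih =>
    rw [List.reverse_cons, mem_δStar_concat] at hu hv
    obtain ⟨u', hu', hu⟩ := hu
    obtain ⟨v', hv', hv⟩ := hv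
    rcases (ih hu' hv').lt_or_eq with hlt | rfl
    · exact A.wheeler_ii hu hv hlt
    · exact (hA u' a hu hv).le
  | rel hab =>
    rw [List.reverse_cons, mem_δStar_concat] at hu hv
    obtain ⟨u', -, hu⟩ := hu
    obtain ⟨v', -, hv⟩ := hv
    exact (A.wheeler_i hu hv hab).le

lemma IsDeterministic.le_of_strColex (hA : A.IsDeterministic) {x y : List α}
    (h : StrColex x y) {u v : Q} (hu : u ∈ A.δStar A.s x) (hv : v ∈ A.δStar A.s y) :
    u ≤ v :=
  hA.le_of_lex_reverse h (by rwa [List.reverse_reverse]) (by rwa [List.reverse_reverse])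

lemma IsDeterministic.le_of_strColex_or_eq (hA : A.IsDeterministic) {x y : List α}
    (h : StrColex x y ∨ x = y) {u v : Q} (hu : u ∈ A.δStar A.s x)
    (hv : v ∈ A.δStar A.s y) : u ≤ v := by
  rcases h with h | rfl
  · exact hA.le_of_strColex h hu hv
  · exact (hA.δStar_subsingleton A.s x hu hv).le

lemma IsDeterministic.strColex_of_lt (hA : A.IsDeterministic) {x y : List α} {u v : Q}
    (hu : u ∈ A.δStar A.s x) (hv : v ∈ A.δStar A.s y) (huv : u < v) : StrColex x y := by
  have := List.Lex.trichotomous (α := α) (· < ·)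
  rcases trichotomous_of (List.Lex (· < ·)) x.reverse y.reverse with h | h | h
  · exact h
  · rw [List.reverse_injective h] at hu
    exact absurd (hA.δStar_subsingleton A.s y hu hv) huv.ne
  · exact absurd (hA.le_of_strColex h hv hu) huv.not_ge

end WNFA

/-- For a Wheeler DFA (a Wheeler NFA whose transition sets are subsingletons, with a
finite state set): reading co-lexicographically smaller strings leads to smaller-or-equal
states, strictly smaller states come from strictly smaller strings, and along any
monotone sequence of readable strings the reached states are eventually constant. -/
theorem wdfa_monotone_states {α Q : Type*} [LinearOrder α] [LinearOrder Q] [Fintype Q]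
    (A : WNFA α Q) (hdet : ∀ (q : Q) (a : α), (A.δ q a).Subsingleton) :
    (∀ x y : List α, x ∈ A.Pref → y ∈ A.Pref →
      ∀ u v : Q, u ∈ A.δStar A.s x → v ∈ A.δStar A.s y →
        (StrColex x y → u ≤ v) ∧ (u < v → StrColex x y)) ∧
    (∀ f : ℕ → List α, (∀ i, f i ∈ A.Pref) →
      ((∀ i, StrColex (f i) (f (i + 1)) ∨ f i = f (i + 1)) ∨
       (∀ i, StrColex (f (i + 1)) (f i) ∨ f (i + 1) = f i)) →
      ∃ n : ℕ, ∀ h k : ℕ, n ≤ h → n ≤ k →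
        A.δStar A.s (f h) = A.δStar A.s (f k)) := by
  have hA : A.IsDeterministic := hdet
  refine ⟨fun x y _ _ u v hu hv =>
    ⟨fun h => hA.le_of_strColex h hu hv, hA.strColex_of_lt hu hv⟩, ?_⟩
  intro f hf hmono
  choose g hg using fun i => A.δStar_nonempty_of_mem_Pref (hf i)
  have hset (i : ℕ) : A.δStar A.s (f i) = {g i} :=
    (hA.δStar_subsingleton A.s (f i)).eq_singleton_of_mem (hg i)
  obtain ⟨n, hn⟩ : ∃ n, ∀ m, n ≤ m → g n = g m := by
    rcases hmono with hm | hm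
    · exact WellFoundedGT.monotone_chain_condition
        ⟨g, monotone_nat_of_le_succ fun i => hA.le_of_strColex_or_eq (hm i) (hg i) (hg (i + 1))⟩
    · exact WellFoundedLT.antitone_chain_condition
        (antitone_nat_of_succ_le fun i => hA.le_of_strColex_or_eq (hm i) (hg (i + 1)) (hg i))
  exact ⟨n, fun h k hh hk => by rw [hset, hset, ← hn h hh, ← hn k hk]⟩
end
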